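/- Let Θ(C) = D(L)^{-1} L where L = chol(C) is the lower Cholesky factor of a full-rank correlation matrix C and D(L) is the diagonal part of L. Then Θ(C) is lower triangular with unit diagonal, and its inverse map is K ↦ Cor(K Kᵀ): that is, Cor(Θ(C) Θ(C)ᵀ) = C for all full-rank correlation matrices C, and Θ(Cor(K Kᵀ)) = K for all lower triangular K with unit diagonal. -/

import Mathlib

/-!
`Θ(L) = D(L)⁻¹ L` only rescales the rows of `L`, so `Θ Θᵀ = D⁻¹ C D⁻¹`, and `Cor` is invariant
under congruence by a positive diagonal matrix. Conversely `Cor(K Kᵀ) = (S K)(S K)ᵀ` for the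
positive diagonal `S = D(K Kᵀ)^{-1/2}`; `S K` is lower triangular with positive diagonal, so by
uniqueness of the Cholesky factor it is the given factor `L'`, and `Θ(S K) = Θ(K) = K` because `K`
has unit diagonal.
-/

open Matrix

/-- `Cor(Σ) = D(Σ)^{-1/2} Σ D(Σ)^{-1/2}`. -/
noncomputable def cor {n : ℕ} (S : Matrix (Fin n) (Fin n) ℝ) :
    Matrix (Fin n) (Fin n) ℝ :=
  (Matrix.diagonal fun i => (Real.sqrt (S i i))⁻¹) * S *
    (Matrix.diagonal fun i => (Real.sqrt (S i i))⁻¹)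

/-- `Θ` applied to a Cholesky factor `L`: `D(L)⁻¹ L`. -/
noncomputable def theta {n : ℕ} (L : Matrix (Fin n) (Fin n) ℝ) :
    Matrix (Fin n) (Fin n) ℝ :=
  (Matrix.diagonal fun i => L i i)⁻¹ * L

namespace Matrix

theorem isDiag_of_isLowerTriangular_of_isUpperTriangular {m α : Type*} [LinearOrder m] [Zero α]
    {A : Matrix m m α} (hlow : A.IsLowerTriangular) (hup : A.IsUpperTriangular) : A.IsDiag :=
  fun _ _ hij => hij.lt_or_gt.elim (fun h => hlow h) (fun h => hup h)

theorem IsLowerTriangular.isUnit_det {m 𝕜 : Type*} [Fintype m] [LinearOrder m] [Field 𝕜]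
    {A : Matrix m m 𝕜} (hA : A.IsLowerTriangular)
    (hdiag : ∀ i, A i i ≠ 0) : IsUnit A.det := by
  rw [det_of_isLowerTriangular A hA, isUnit_iff_ne_zero]
  exact Finset.prod_ne_zero_iff.2 fun i _ => hdiag i

theorem IsLowerTriangular.eq_of_mul_transpose_eq {m 𝕜 : Type*} [Fintype m] [LinearOrder m]
    [Field 𝕜] [LinearOrder 𝕜] [IsStrictOrderedRing 𝕜] {A B : Matrix m m 𝕜}
    (hA : A.IsLowerTriangular) (hAdiag : ∀ i, 0 < A i i)
    (hB : B.IsLowerTriangular) (hBdiag : ∀ i, 0 < B i i)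
    (h : A * Aᵀ = B * Bᵀ) : A = B := by
  have hdetB := hB.isUnit_det fun i => (hBdiag i).ne'
  have hdetAt : IsUnit Aᵀ.det := by
    rw [det_transpose]; exact hA.isUnit_det fun i => (hAdiag i).ne'
  have := B.invertibleOfIsUnitDet hdetB
  have := Aᵀ.invertibleOfIsUnitDet hdetAt
  -- `U = B⁻¹ A = Bᵀ (Aᵀ)⁻¹` is both lower and upper triangular, hence diagonal.
  set U := B⁻¹ * A
  have hBU : B * U = A := by rw [← Matrix.mul_assoc, mul_nonsing_inv _ hdetB, Matrix.one_mul]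
  have hUAt : U * Aᵀ = Bᵀ := by
    rw [Matrix.mul_assoc, h, ← Matrix.mul_assoc, nonsing_inv_mul _ hdetB, Matrix.one_mul]
  have hUlow : U.IsLowerTriangular :=
    (blockTriangular_inv_of_blockTriangular hB).mul hA
  have hUup : U.IsUpperTriangular := by
    have hU : U = Bᵀ * Aᵀ⁻¹ := by
      rw [← hUAt, Matrix.mul_assoc, mul_nonsing_inv _ hdetAt, Matrix.mul_one]
    rw [hU]
    exact hB.transpose.mul (blockTriangular_inv_of_blockTriangular hA.transpose)
  obtain ⟨d, hUd⟩ : ∃ d, U = diagonal d :=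
    ⟨_, (isDiag_of_isLowerTriangular_of_isUpperTriangular hUlow hUup).diagonal_diag.symm⟩
  -- The diagonals of `B * diagonal d = A` and `diagonal d * Aᵀ = Bᵀ` give `d i ^ 2 = 1`.
  have hd : ∀ i, d i = 1 := by
    intro i
    have h₁ : B i i * d i = A i i := by simpa [hUd] using congrFun (congrFun hBU i) i
    have h₂ : d i * A i i = B i i := by simpa [hUd] using congrFun (congrFun hUAt i) i
    have hpos : 0 < d i := pos_of_mul_pos_right (h₁ ▸ hAdiag i) (hBdiag i).le
    nlinarith [hAdiag i, hBdiag i]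
  rw [← hBU, hUd, show d = fun _ => 1 from funext hd, diagonal_one, Matrix.mul_one]

end Matrix

section

variable {n : ℕ}

theorem theta_eq_diagonal_mul {L : Matrix (Fin n) (Fin n) ℝ} (hL : ∀ i, L i i ≠ 0) :
    theta L = diagonal (fun i => (L i i)⁻¹) * L := by
  rw [theta, inv_eq_left_inv]
  rw [diagonal_mul_diagonal, ← diagonal_one]
  exact congrArg diagonal (funext fun i => inv_mul_cancel₀ (hL i))

theorem theta_apply {L : Matrix (Fin n) (Fin n) ℝ} (hL : ∀ i, L i i ≠ 0) (i j : Fin n) :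
    theta L i j = (L i i)⁻¹ * L i j := by
  rw [theta_eq_diagonal_mul hL, diagonal_mul]

theorem theta_isLowerTriangular {L : Matrix (Fin n) (Fin n) ℝ} (hL : L.IsLowerTriangular)
    (hLdiag : ∀ i, L i i ≠ 0) : (theta L).IsLowerTriangular := by
  rw [theta_eq_diagonal_mul hLdiag]
  exact (blockTriangular_diagonal _).mul hL

theorem theta_apply_self {L : Matrix (Fin n) (Fin n) ℝ} (hL : ∀ i, L i i ≠ 0) (i : Fin n) :
    theta L i i = 1 := by
  rw [theta_apply hL, inv_mul_cancel₀ (hL i)]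

theorem theta_diagonal_mul {w : Fin n → ℝ} (hw : ∀ i, w i ≠ 0) {A : Matrix (Fin n) (Fin n) ℝ}
    (hA : ∀ i, A i i ≠ 0) : theta (diagonal w * A) = theta A := by
  have hwA : ∀ i, (diagonal w * A) i i ≠ 0 := fun i => by
    rw [diagonal_mul]; exact mul_ne_zero (hw i) (hA i)
  ext i j
  rw [theta_apply hwA, theta_apply hA, diagonal_mul, diagonal_mul, mul_inv,
    mul_mul_mul_comm, inv_mul_cancel₀ (hw i), one_mul]

theorem theta_eq_self {K : Matrix (Fin n) (Fin n) ℝ} (hK : ∀ i, K i i = 1) : theta K = K := by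
  ext i j
  rw [theta_apply (fun i => by simp [hK i]), hK, inv_one, one_mul]

theorem theta_mul_transpose {L : Matrix (Fin n) (Fin n) ℝ} (hL : ∀ i, L i i ≠ 0) :
    theta L * (theta L)ᵀ =
      diagonal (fun i => (L i i)⁻¹) * (L * Lᵀ) * diagonal (fun i => (L i i)⁻¹) := by
  rw [theta_eq_diagonal_mul hL, transpose_mul, diagonal_transpose]
  simp only [Matrix.mul_assoc]

theorem cor_apply (S : Matrix (Fin n) (Fin n) ℝ) (i j : Fin n) :
    cor S i j = (√(S i i))⁻¹ * S i j * (√(S j j))⁻¹ := by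
  rw [cor, mul_diagonal, diagonal_mul]

theorem cor_of_diag_eq_one {S : Matrix (Fin n) (Fin n) ℝ} (hS : ∀ i, S i i = 1) : cor S = S := by
  ext i j
  rw [cor_apply, hS, hS, Real.sqrt_one, inv_one, one_mul, mul_one]

theorem cor_diagonal_mul_mul_diagonal {w : Fin n → ℝ} (hw : ∀ i, 0 < w i)
    (S : Matrix (Fin n) (Fin n) ℝ) : cor (diagonal w * S * diagonal w) = cor S := by
  have hsqrt : ∀ i, √(w i * S i i * w i) = w i * √(S i i) := fun i => by
    rw [mul_comm, ← mul_assoc, Real.sqrt_mul (mul_self_nonneg _), Real.sqrt_mul_self (hw i).le]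
  ext i j
  simp only [cor_apply, mul_diagonal, diagonal_mul, hsqrt]
  field_simp [(hw i).ne', (hw j).ne']

theorem cor_mul_transpose (A : Matrix (Fin n) (Fin n) ℝ) :
    cor (A * Aᵀ) = (diagonal (fun i => (√((A * Aᵀ) i i))⁻¹) * A) *
      (diagonal (fun i => (√((A * Aᵀ) i i))⁻¹) * A)ᵀ := by
  rw [cor, transpose_mul, diagonal_transpose]
  simp only [Matrix.mul_assoc]

theorem sq_le_mul_transpose_apply_self (A : Matrix (Fin n) (Fin n) ℝ) (i : Fin n) :
    A i i ^ 2 ≤ (A * Aᵀ) i i := by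
  rw [mul_apply]
  simp only [transpose_apply, ← sq]
  exact Finset.single_le_sum (fun j _ => sq_nonneg (A i j)) (Finset.mem_univ i)

end

theorem theta_unit_lower_triangular_and_inverse_general {n : ℕ}
    (C L : Matrix (Fin n) (Fin n) ℝ)
    (hCdiag : ∀ i : Fin n, C i i = 1)
    (hLlow : ∀ i j : Fin n, i < j → L i j = 0)
    (hLdiag : ∀ i : Fin n, 0 < L i i)
    (hfac : C = L * Lᵀ) :
    ((∀ i j : Fin n, i < j → theta L i j = 0) ∧ ∀ i : Fin n, theta L i i = 1) ∧
      cor (theta L * (theta L)ᵀ) = C ∧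
      (∀ K L' : Matrix (Fin n) (Fin n) ℝ,
        (∀ i j : Fin n, i < j → K i j = 0) → (∀ i : Fin n, K i i = 1) →
        (∀ i j : Fin n, i < j → L' i j = 0) → (∀ i : Fin n, 0 < L' i i) →
        cor (K * Kᵀ) = L' * L'ᵀ →
        theta L' = K) := by
  have hLne : ∀ i, L i i ≠ 0 := fun i => (hLdiag i).ne'
  refine ⟨⟨fun i j hij => theta_isLowerTriangular (fun i j => hLlow i j) hLne hij,
    theta_apply_self hLne⟩, ?_, ?_⟩
  · rw [theta_mul_transpose hLne, ← hfac,
      cor_diagonal_mul_mul_diagonal (fun i => inv_pos.2 (hLdiag i)), cor_of_diag_eq_one hCdiag]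
  · intro K L' hKlow hKdiag hL'low hL'diag hcor
    set s : Fin n → ℝ := fun i => (√((K * Kᵀ) i i))⁻¹
    have hs : ∀ i, 0 < s i := fun i => inv_pos.2 <| Real.sqrt_pos.2 <|
      (by simp [hKdiag i] : (0 : ℝ) < K i i ^ 2).trans_le (sq_le_mul_transpose_apply_self K i)
    have hKne : ∀ i, K i i ≠ 0 := fun i => by simp [hKdiag i]
    have hL' : diagonal s * K = L' :=
      IsLowerTriangular.eq_of_mul_transpose_eq
        ((blockTriangular_diagonal s).mul fun i j => hKlow i j)
        (fun i => by simpa [diagonal_mul, hKdiag] using hs i) (fun i j => hL'low i j) hL'diag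
        (by rw [← hcor, cor_mul_transpose])
    rw [← hL', theta_diagonal_mul (fun i => (hs i).ne') hKne, theta_eq_self hKdiag]

/-- for a full-rank correlation matrix `C` with lower Cholesky
factor `L` (lower triangular, positive diagonal, `C = L Lᵀ`), the matrix
`Θ(C) = D(L)⁻¹ L` is lower triangular with unit diagonal, and `K ↦ Cor(K Kᵀ)`
is inverse to `Θ`: `Cor(Θ(C) Θ(C)ᵀ) = C`, and for every lower triangular `K`
with unit diagonal, the `Θ` of `Cor(K Kᵀ)` (computed from its Cholesky factor)
equals `K`. -/
theorem theta_unit_lower_triangular_and_inverse {n : ℕ}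
    (C L : Matrix (Fin n) (Fin n) ℝ)
    (hC : C.PosDef) (hCdiag : ∀ i : Fin n, C i i = 1)
    (hLlow : ∀ i j : Fin n, i < j → L i j = 0)
    (hLdiag : ∀ i : Fin n, 0 < L i i)
    (hfac : C = L * Lᵀ) :
    ((∀ i j : Fin n, i < j → theta L i j = 0) ∧ ∀ i : Fin n, theta L i i = 1) ∧
      cor (theta L * (theta L)ᵀ) = C ∧
      (∀ K L' : Matrix (Fin n) (Fin n) ℝ,
        (∀ i j : Fin n, i < j → K i j = 0) → (∀ i : Fin n, K i i = 1) →
        (∀ i j : Fin n, i < j → L' i j = 0) → (∀ i : Fin n, 0 < L' i i) →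
        cor (K * Kᵀ) = L' * L'ᵀ →
        theta L' = K) :=
  theta_unit_lower_triangular_and_inverse_general C L hCdiag hLlow hLdiag hfac
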